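/- For every antichain Γ in the poset Δ⁺ of positive roots of type A_n, the OY-number satisfies 0 ≤ 𝒴(Γ) ≤ n − 1. -/

import Mathlib

open Finset

/-- The root order on pairs: `(i,j) ≼ (i',j')` iff `i' ≤ i` and `j ≤ j'`. -/
def rle (p q : ℕ × ℕ) : Prop := q.1 ≤ p.1 ∧ p.2 ≤ q.2

instance : DecidableRel rle := fun p q =>
  inferInstanceAs (Decidable (q.1 ≤ p.1 ∧ p.2 ≤ q.2))

/-- The positive roots of type `A_n`, modelled as pairs `(i,j)` with `1 ≤ i ≤ j ≤ n`. -/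
def roots (n : ℕ) : Finset (ℕ × ℕ) :=
  ((Finset.Icc 1 n) ×ˢ (Finset.Icc 1 n)).filter (fun p => p.1 ≤ p.2)

/-- `Γ` is an antichain in `Δ⁺(A_n)`: a set of pairwise incomparable positive roots. -/
def IsAC (n : ℕ) (Γ : Finset (ℕ × ℕ)) : Prop :=
  Γ ⊆ roots n ∧ ∀ p ∈ Γ, ∀ q ∈ Γ, rle p q → p = q

/-- The upper ideal `I(Γ) = {x ∈ Δ⁺ : ∃ γ ∈ Γ, γ ≼ x}` generated by `Γ`. -/
def upIdeal (n : ℕ) (Γ : Finset (ℕ × ℕ)) : Finset (ℕ × ℕ) :=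
  (roots n).filter (fun x => ∃ γ ∈ Γ, rle γ x)

/-- The set of maximal elements of `S` with respect to the root order. -/
def maxOf (S : Finset (ℕ × ℕ)) : Finset (ℕ × ℕ) :=
  S.filter (fun x => ∀ y ∈ S, rle x y → y = x)

/-- The set of minimal elements of `S` with respect to the root order. -/
def minOf (S : Finset (ℕ × ℕ)) : Finset (ℕ × ℕ) :=
  S.filter (fun x => ∀ y ∈ S, rle y x → y = x)

/-- The reverse operator `𝔛`, sending an antichain `Γ` to the set of maximal
elements of `Δ⁺ \ I(Γ)`. -/
def Xrev (n : ℕ) (Γ : Finset (ℕ × ℕ)) : Finset (ℕ × ℕ) :=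
  maxOf (roots n \ upIdeal n Γ)

/-- `r_Γ(γ) = #(I(Γ) \ {γ})_min − #I(Γ)_min + 1`. -/
def rGam (n : ℕ) (Γ : Finset (ℕ × ℕ)) (γ : ℕ × ℕ) : ℤ :=
  ((minOf (upIdeal n Γ \ {γ})).card : ℤ) - ((minOf (upIdeal n Γ)).card : ℤ) + 1

/-- The OY-number `𝒴(Γ) = Σ_{γ ∈ Γ} r_Γ(γ)`; in particular `𝒴(∅) = 0`. -/
def OY (n : ℕ) (Γ : Finset (ℕ × ℕ)) : ℤ := ∑ γ ∈ Γ, rGam n Γ γ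

/-!
The minimal elements of `I(Γ)` are `Γ` itself, and removing `γ = (i,j)` from `I(Γ)` frees exactly
those of its two covers `(i-1,j)`, `(i,j+1)` that lie above no other element of `Γ`. The first and
the second coordinates of an antichain are distinct and increase together, so with `S`, `T` the
sets of first and second coordinates, `r_Γ(γ) = [i ≥ 2, i-1 ∉ S] + [j < n, j+1 ∉ T]`. Hence `𝒴(Γ)`
counts the runs of `S` not starting at `1` plus the runs of `T` not ending at `n`. Recording each
run by its first element, resp. the successor of its last one, both kinds live in `{2,…,n}`; they
can coincide only on `S \ T`, and they avoid `T \ S ⊆ {2,…,n}`, which has as many elements as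
`S \ T`.
-/

namespace rle

lemma refl (p : ℕ × ℕ) : rle p p := ⟨le_rfl, le_rfl⟩

lemma trans {p q r : ℕ × ℕ} (hpq : rle p q) (hqr : rle q r) : rle p r :=
  ⟨hqr.1.trans hpq.1, hpq.2.trans hqr.2⟩

lemma antisymm {p q : ℕ × ℕ} (hpq : rle p q) (hqp : rle q p) : p = q :=
  Prod.ext (hqp.1.antisymm hpq.1) (hpq.2.antisymm hqp.2)

end rle

lemma mem_roots {n : ℕ} {p : ℕ × ℕ} : p ∈ roots n ↔ 1 ≤ p.1 ∧ p.1 ≤ p.2 ∧ p.2 ≤ n := by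
  simp only [roots, mem_filter, mem_product, mem_Icc]
  omega

lemma mem_upIdeal {n : ℕ} {Γ : Finset (ℕ × ℕ)} {x : ℕ × ℕ} :
    x ∈ upIdeal n Γ ↔ x ∈ roots n ∧ ∃ γ ∈ Γ, rle γ x :=
  mem_filter

lemma mem_minOf {S : Finset (ℕ × ℕ)} {x : ℕ × ℕ} :
    x ∈ minOf S ↔ x ∈ S ∧ ∀ y ∈ S, rle y x → y = x :=
  mem_filter

lemma mem_minOf_of_subset {S T : Finset (ℕ × ℕ)} {x : ℕ × ℕ} (hx : x ∈ minOf S) (hxT : x ∈ T)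
    (hTS : T ⊆ S) : x ∈ minOf T :=
  mem_minOf.2 ⟨hxT, fun y hy => (mem_minOf.1 hx).2 y (hTS hy)⟩

lemma cover_iff_eq_or_eq {n : ℕ} {γ x : ℕ × ℕ} (hγ : γ ∈ roots n) (hx : x ∈ roots n)
    (hγx : rle γ x) (hne : x ≠ γ) :
    (∀ y ∈ roots n, rle γ y → rle y x → y = γ ∨ y = x) ↔
      x = (γ.1 - 1, γ.2) ∨ x = (γ.1, γ.2 + 1) := by
  obtain ⟨γ1, γ2⟩ := γ
  obtain ⟨x1, x2⟩ := x
  simp only [mem_roots, rle, ne_eq, Prod.mk.injEq] at *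
  constructor
  · intro hbetween
    have hbelow := hbetween (x1, x2 - 1)
    have hright := hbetween (x1 + 1, x2)
    simp only [Prod.mk.injEq] at hbelow hright
    omega
  · rintro hcov ⟨y1, y2⟩ - hγy hyx
    simp only [Prod.mk.injEq] at *
    omega

/-- The minimal elements of `I(Γ) \ {γ}` outside `Γ`. -/
def freedCovers (n : ℕ) (Γ : Finset (ℕ × ℕ)) (γ : ℕ × ℕ) : Finset (ℕ × ℕ) :=
  ({(γ.1 - 1, γ.2), (γ.1, γ.2 + 1)} : Finset (ℕ × ℕ)).filter
    fun x => x ∈ roots n ∧ ∀ γ' ∈ Γ, rle γ' x → γ' = γ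

lemma disjoint_erase_freedCovers {n : ℕ} {Γ : Finset (ℕ × ℕ)} (γ : ℕ × ℕ) :
    Disjoint (Γ.erase γ) (freedCovers n Γ γ) := by
  rw [disjoint_left]
  intro x hxΓ hx
  exact (mem_erase.1 hxΓ).1 ((mem_filter.1 hx).2.2 x (mem_erase.1 hxΓ).2 (rle.refl x))

namespace IsAC

variable {n : ℕ} {Γ : Finset (ℕ × ℕ)} (hΓ : IsAC n Γ)
include hΓ

lemma fst_lt_iff_snd_lt {p q : ℕ × ℕ} (hp : p ∈ Γ) (hq : q ∈ Γ) : p.1 < q.1 ↔ p.2 < q.2 := by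
  constructor
  · intro h
    by_contra! h'
    exact h.ne' (congrArg Prod.fst (hΓ.2 q hq p hp ⟨h.le, h'⟩))
  · intro h
    by_contra! h'
    exact h.ne (congrArg Prod.snd (hΓ.2 p hp q hq ⟨h', h.le⟩))

lemma fst_injOn : Set.InjOn Prod.fst (Γ : Set (ℕ × ℕ)) := by
  intro p hp q hq h
  rcases le_total p.2 q.2 with hpq | hqp
  · exact hΓ.2 p hp q hq ⟨h.ge, hpq⟩
  · exact (hΓ.2 q hq p hp ⟨h.le, hqp⟩).symm

lemma snd_injOn : Set.InjOn Prod.snd (Γ : Set (ℕ × ℕ)) := by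
  intro p hp q hq h
  rcases le_total p.1 q.1 with hpq | hqp
  · exact (hΓ.2 q hq p hp ⟨hpq, h.ge⟩).symm
  · exact hΓ.2 p hp q hq ⟨hqp, h.le⟩

lemma minOf_upIdeal : minOf (upIdeal n Γ) = Γ := by
  ext x
  simp only [mem_minOf, mem_upIdeal]
  constructor
  · rintro ⟨⟨-, γ, hγ, hγx⟩, hmin⟩
    rwa [← hmin γ ⟨hΓ.1 hγ, γ, hγ, rle.refl γ⟩ hγx]
  · intro hx
    refine ⟨⟨hΓ.1 hx, x, hx, rle.refl x⟩, ?_⟩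
    rintro y ⟨-, γ, hγ, hγy⟩ hyx
    obtain rfl := hΓ.2 γ hγ x hx (hγy.trans hyx)
    exact hyx.antisymm hγy

lemma minOf_upIdeal_sdiff {γ : ℕ × ℕ} (hγ : γ ∈ Γ) :
    minOf (upIdeal n Γ \ {γ}) = Γ.erase γ ∪ freedCovers n Γ γ := by
  have mem_sdiff_of {y : ℕ × ℕ} (hy : y ∈ roots n) (γ' : ℕ × ℕ) (hγ' : γ' ∈ Γ) (hγ'y : rle γ' y)
      (hyγ : y ≠ γ) : y ∈ upIdeal n Γ \ {γ} :=
    mem_sdiff.2 ⟨mem_upIdeal.2 ⟨hy, γ', hγ', hγ'y⟩, by simpa using hyγ⟩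
  ext x
  rw [mem_union, mem_erase, freedCovers, mem_filter, mem_insert, mem_singleton]
  constructor
  · intro hx
    obtain ⟨hxIγ, hmin⟩ := mem_minOf.1 hx
    obtain ⟨hxI, hxγ⟩ := mem_sdiff.1 hxIγ
    rw [mem_singleton] at hxγ
    by_cases hxΓ : x ∈ Γ
    · exact Or.inl ⟨hxγ, hxΓ⟩
    have honly : ∀ γ' ∈ Γ, rle γ' x → γ' = γ := fun γ' hγ' hγ'x => by
      by_contra hne
      exact hxΓ (hmin γ' (mem_sdiff_of (hΓ.1 hγ') γ' hγ' (rle.refl γ') hne) hγ'x ▸ hγ')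
    obtain ⟨hxr, γ', hγ', hγ'x⟩ := mem_upIdeal.1 hxI
    have hγx : rle γ x := honly γ' hγ' hγ'x ▸ hγ'x
    refine Or.inr ⟨(cover_iff_eq_or_eq (hΓ.1 hγ) hxr hγx hxγ).1 ?_, hxr, honly⟩
    intro y hy hγy hyx
    by_cases hyγ : y = γ
    · exact Or.inl hyγ
    · exact Or.inr (hmin y (mem_sdiff_of hy γ hγ hγy hyγ) hyx)
  · rintro (⟨hxγ, hxΓ⟩ | ⟨hcov, hxr, honly⟩)
    · exact mem_minOf_of_subset (by rwa [hΓ.minOf_upIdeal])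
        (mem_sdiff_of (hΓ.1 hxΓ) x hxΓ (rle.refl x) hxγ) sdiff_subset
    have hγr := mem_roots.1 (hΓ.1 hγ)
    have hγx : rle γ x := by rcases hcov with rfl | rfl <;> exact ⟨by simp, by simp⟩
    have hxγ : x ≠ γ := by rcases hcov with rfl | rfl <;> rw [Ne, Prod.ext_iff] <;> omega
    refine mem_minOf.2 ⟨mem_sdiff_of hxr γ hγ hγx hxγ, fun y hy hyx => ?_⟩
    obtain ⟨hyI, hyγ⟩ := mem_sdiff.1 hy
    obtain ⟨hyr, γ', hγ', hγ'y⟩ := mem_upIdeal.1 hyI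
    have hγy : rle γ y := honly γ' hγ' (hγ'y.trans hyx) ▸ hγ'y
    exact ((cover_iff_eq_or_eq (hΓ.1 hγ) hxr hγx hxγ).2 hcov y hyr hγy hyx).resolve_left
      (by simpa using hyγ)

lemma rGam_eq {γ : ℕ × ℕ} (hγ : γ ∈ Γ) : rGam n Γ γ = #(freedCovers n Γ γ) := by
  rw [rGam, hΓ.minOf_upIdeal_sdiff hγ, hΓ.minOf_upIdeal,
    card_union_of_disjoint (disjoint_erase_freedCovers γ), card_erase_of_mem hγ,
    Nat.cast_add, Nat.cast_sub (card_pos.2 ⟨γ, hγ⟩)]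
  ring

lemma rle_leftCover_iff {γ γ' : ℕ × ℕ} (hγ : γ ∈ Γ) (hγ' : γ' ∈ Γ) :
    rle γ' (γ.1 - 1, γ.2) ↔ γ' = γ ∨ γ'.1 = γ.1 - 1 := by
  have hγr := mem_roots.1 (hΓ.1 hγ)
  by_cases hγ'γ : γ' = γ
  · subst hγ'γ
    simp only [rle, true_or, iff_true]
    omega
  have := hΓ.fst_lt_iff_snd_lt hγ' hγ
  have := hΓ.fst_injOn.ne hγ' hγ hγ'γ
  have := hΓ.snd_injOn.ne hγ' hγ hγ'γ
  simp only [rle, hγ'γ, false_or]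
  omega

lemma rle_rightCover_iff {γ γ' : ℕ × ℕ} (hγ : γ ∈ Γ) (hγ' : γ' ∈ Γ) :
    rle γ' (γ.1, γ.2 + 1) ↔ γ' = γ ∨ γ'.2 = γ.2 + 1 := by
  by_cases hγ'γ : γ' = γ
  · subst hγ'γ
    simp only [rle, true_or, iff_true]
    omega
  have := hΓ.fst_lt_iff_snd_lt hγ' hγ
  have := hΓ.fst_injOn.ne hγ' hγ hγ'γ
  have := hΓ.snd_injOn.ne hγ' hγ hγ'γ
  simp only [rle, hγ'γ, false_or]
  omega

lemma card_freedCovers {γ : ℕ × ℕ} (hγ : γ ∈ Γ) :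
    #(freedCovers n Γ γ) =
      (if 2 ≤ γ.1 ∧ γ.1 - 1 ∉ Γ.image Prod.fst then 1 else 0) +
        (if γ.2 + 1 ≤ n ∧ γ.2 + 1 ∉ Γ.image Prod.snd then 1 else 0) := by
  have hγr := mem_roots.1 (hΓ.1 hγ)
  rw [freedCovers, card_filter, sum_pair (by rw [Ne, Prod.ext_iff]; omega)]
  congr 1 <;> refine if_congr ?_ rfl rfl <;>
    simp only [mem_roots, mem_image, not_exists, not_and]
  · refine ⟨fun ⟨hr, honly⟩ => ⟨by omega, fun γ' hγ' h => ?_⟩,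
      fun ⟨h2, hnot⟩ => ⟨by omega, fun γ' hγ' hle => ?_⟩⟩
    · have := honly γ' hγ' ((hΓ.rle_leftCover_iff hγ hγ').2 (Or.inr h))
      subst this
      omega
    · exact ((hΓ.rle_leftCover_iff hγ hγ').1 hle).resolve_right (hnot γ' hγ')
  · refine ⟨fun ⟨hr, honly⟩ => ⟨by omega, fun γ' hγ' h => ?_⟩,
      fun ⟨h2, hnot⟩ => ⟨by omega, fun γ' hγ' hle => ?_⟩⟩
    · have := honly γ' hγ' ((hΓ.rle_rightCover_iff hγ hγ').2 (Or.inr h))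
      subst this
      omega
    · exact ((hΓ.rle_rightCover_iff hγ hγ').1 hle).resolve_right (hnot γ' hγ')

lemma image_fst_subset : Γ.image Prod.fst ⊆ Icc 1 n := by
  intro v hv
  obtain ⟨γ, hγ, rfl⟩ := mem_image.1 hv
  have := mem_roots.1 (hΓ.1 hγ)
  exact mem_Icc.2 ⟨this.1, by omega⟩

lemma image_snd_subset : Γ.image Prod.snd ⊆ Icc 1 n := by
  intro v hv
  obtain ⟨γ, hγ, rfl⟩ := mem_image.1 hv
  have := mem_roots.1 (hΓ.1 hγ)
  exact mem_Icc.2 ⟨by omega, this.2.2⟩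

lemma one_mem_image_fst (h : 1 ∈ Γ.image Prod.snd) : 1 ∈ Γ.image Prod.fst := by
  obtain ⟨γ, hγ, h1⟩ := mem_image.1 h
  have := mem_roots.1 (hΓ.1 hγ)
  exact mem_image.2 ⟨γ, hγ, by omega⟩

lemma OY_eq :
    OY n Γ = (#{v ∈ Γ.image Prod.fst | 2 ≤ v ∧ v - 1 ∉ Γ.image Prod.fst} +
      #{w ∈ Γ.image Prod.snd | w + 1 ≤ n ∧ w + 1 ∉ Γ.image Prod.snd} : ℕ) := by
  rw [OY, sum_congr rfl fun γ hγ => hΓ.rGam_eq hγ, ← Nat.cast_sum,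
    sum_congr rfl fun γ hγ => hΓ.card_freedCovers hγ, sum_add_distrib, card_filter, card_filter,
    sum_image hΓ.fst_injOn, sum_image hΓ.snd_injOn]

end IsAC

lemma card_runStarts_add_card_runEnds_le {n : ℕ} {S T : Finset ℕ} (hS : S ⊆ Icc 1 n)
    (hT : T ⊆ Icc 1 n) (hST : #S = #T) (h1 : 1 ∈ T → 1 ∈ S) :
    #{v ∈ S | 2 ≤ v ∧ v - 1 ∉ S} + #{w ∈ T | w + 1 ≤ n ∧ w + 1 ∉ T} ≤ n - 1 := by
  set A := {v ∈ S | 2 ≤ v ∧ v - 1 ∉ S}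
  set B := {w ∈ T | w + 1 ≤ n ∧ w + 1 ∉ T}.image (· + 1)
  have hB : #B = #{w ∈ T | w + 1 ≤ n ∧ w + 1 ∉ T} :=
    card_image_of_injective _ (add_left_injective 1)
  have hAB : A ∩ B ⊆ S \ T := by
    intro m hm
    obtain ⟨hmA, hmB⟩ := mem_inter.1 hm
    obtain ⟨w, hw, rfl⟩ := mem_image.1 hmB
    exact mem_sdiff.2 ⟨(mem_filter.1 hmA).1, (mem_filter.1 hw).2.2⟩
  have hdisj : Disjoint (A ∪ B) (T \ S) := by
    refine disjoint_left.2 fun m hm hmTS => ?_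
    obtain ⟨hmT, hmS⟩ := mem_sdiff.1 hmTS
    rcases mem_union.1 hm with hmA | hmB
    · exact hmS (mem_filter.1 hmA).1
    · obtain ⟨w, hw, rfl⟩ := mem_image.1 hmB
      exact (mem_filter.1 hw).2.2 hmT
  have hsub : A ∪ B ∪ (T \ S) ⊆ Icc 2 n := by
    refine union_subset (union_subset (fun m hm => ?_) fun m hm => ?_) fun m hm => ?_
    · obtain ⟨hmS, h2, -⟩ := mem_filter.1 hm
      exact mem_Icc.2 ⟨h2, (mem_Icc.1 (hS hmS)).2⟩
    · obtain ⟨w, hw, rfl⟩ := mem_image.1 hm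
      obtain ⟨hwT, hwn, -⟩ := mem_filter.1 hw
      have := mem_Icc.1 (hT hwT)
      exact mem_Icc.2 ⟨by omega, hwn⟩
    · obtain ⟨hmT, hmS⟩ := mem_sdiff.1 hm
      have hm1 : m ≠ 1 := fun h => hmS (h ▸ h1 (h ▸ hmT))
      have := mem_Icc.1 (hT hmT)
      exact mem_Icc.2 ⟨by omega, this.2⟩
  calc #A + #{w ∈ T | w + 1 ≤ n ∧ w + 1 ∉ T}
      = #(A ∪ B) + #(A ∩ B) := by rw [card_union_add_card_inter, hB]
    _ ≤ #(A ∪ B) + #(T \ S) :=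
        Nat.add_le_add_left ((card_le_card hAB).trans (card_sdiff_comm hST).le) _
    _ = #(A ∪ B ∪ (T \ S)) := (card_union_of_disjoint hdisj).symm
    _ ≤ #(Icc 2 n) := card_le_card hsub
    _ = n - 1 := by simp

/-- For every antichain `Γ` in `Δ⁺(A_n)`, the OY-number satisfies
`0 ≤ 𝒴(Γ) ≤ n − 1`. -/
theorem stmt6 (n : ℕ) (hn : 1 ≤ n) (Γ : Finset (ℕ × ℕ)) (hΓ : IsAC n Γ) :
    0 ≤ OY n Γ ∧ OY n Γ ≤ (n : ℤ) - 1 := by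
  have hST : #(Γ.image Prod.fst) = #(Γ.image Prod.snd) := by
    rw [card_image_of_injOn hΓ.fst_injOn, card_image_of_injOn hΓ.snd_injOn]
  have := card_runStarts_add_card_runEnds_le hΓ.image_fst_subset hΓ.image_snd_subset hST
    hΓ.one_mem_image_fst
  rw [hΓ.OY_eq]
  omega
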